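/- arXiv:0803.3554 — 4 statements merged into one kernel-verified Lean document; each statement's English description precedes it below -/
import Mathlib

section
/- Let S(z) = Id + S_1 z^{-1} + ⋯ satisfy S*(-z)S(z) = Id, and define operators W_{k,l} (k,l ≥ 0) by the expansion ((S*)^{-1}(w) S^{-1}(z) - Id)/(z+w) = ∑_{k,l≥0} W_{k,l} z^{-k} w^{-l}. Then for all k, l ≥ 0: ∑_{m=0}^{k} W_{m,l} S_{k-m} = (-1)^{l+1} S_{k+l+1}. -/
/-!
Multiplying the defining relation `(z⁻¹ + w⁻¹) W(z, w) = U(w) S⁻¹(z) - 1` on the right by `S(z)`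
gives `(z⁻¹ + w⁻¹) W(z, w) S(z) = U(w) - S(z)`, whose right side has no mixed terms `z⁻ᵏ w⁻ˡ`
with `k > 0`. Writing `P_l(z)` for the coefficient of `w⁻ˡ` in `W(z, w) S(z)`, comparing
coefficients of `z⁻⁽ᵏ⁺¹⁾ w⁻ˡ` gives `(P_0)_k = -S_{k+1}` and `(P_{l+1})_k = -(P_l)_{k+1}`,
and induction on `l` yields `(P_l)_k = (-1)^{l+1} S_{k+l+1}`. The power series variable `X`
plays the role of `z⁻¹`.
-/

namespace PowerSeries

variable {R : Type*} [Ring R]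

theorem coeff_mk_mul_mk (f g : ℕ → R) (n : ℕ) :
    coeff n (mk f * mk g) = ∑ i ∈ Finset.range (n + 1), f i * g (n - i) := by
  rw [coeff_mul, Finset.Nat.sum_antidiagonal_eq_sum_range_succ_mk]
  simp only [coeff_mk]

theorem coeff_X_mul_mk (f : ℕ → R) (n : ℕ) :
    coeff n (X * mk f) = if n = 0 then 0 else f (n - 1) := by
  cases n <;> simp [coeff_succ_X_mul]

theorem mk_mul_mk_eq_one {f g : ℕ → R}
    (h : ∀ n, ∑ i ∈ Finset.range (n + 1), f i * g (n - i) = if n = 0 then 1 else 0) :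
    mk f * mk g = 1 := by
  ext n
  rw [coeff_mk_mul_mk, h, coeff_one]

theorem mul_eq_one_symm_of_isUnit_constantCoeff {φ ψ : R⟦X⟧}
    (hφ : IsUnit (constantCoeff φ)) (h : φ * ψ = 1) : ψ * φ = 1 :=
  (isUnit_iff_constantCoeff.mpr hφ).isRegular.left.mul_eq_one_symm h

variable {S T : R⟦X⟧}

theorem coeff_mul_add_coeff_succ_mul_eq (hTS : T * S = 1) {P Q : R⟦X⟧} {u c : R}
    (h : X * P + Q = C u * T - C c) (k : ℕ) :
    coeff k (P * S) + coeff (k + 1) (Q * S) = -(c * coeff (k + 1) S) := by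
  have hS : X * (P * S) + Q * S = C u - C c * S := by
    rw [← mul_assoc, ← add_mul, h, sub_mul, mul_assoc, hTS, mul_one]
  simpa [coeff_succ_X_mul, coeff_C] using congrArg (coeff (k + 1)) hS

theorem coeff_mul_eq_neg_one_pow_mul_coeff (hTS : T * S = 1) (P : ℕ → R⟦X⟧) (u : ℕ → R)
    (h0 : X * P 0 = C (u 0) * T - 1) (hsucc : ∀ l, X * P (l + 1) + P l = C (u (l + 1)) * T)
    (k l : ℕ) : coeff k (P l * S) = (-1) ^ (l + 1) * coeff (k + l + 1) S := by
  induction l generalizing k with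
  | zero =>
    have := coeff_mul_add_coeff_succ_mul_eq hTS (Q := 0) (u := u 0) (c := 1)
      (by rw [add_zero, h0, map_one]) k
    simpa using this
  | succ l ih =>
    have := coeff_mul_add_coeff_succ_mul_eq hTS (u := u (l + 1)) (c := 0)
      (by rw [hsucc, map_zero, sub_zero]) k
    rw [ih, zero_mul, neg_zero, add_eq_zero_iff_eq_neg] at this
    rw [this, pow_succ, ← add_assoc, add_right_comm k]
    noncomm_ring

end PowerSeries

open PowerSeries

theorem stmt_5_general {H : Type*} [AddCommGroup H] [Module ℂ H]
    (S T U : ℕ → (H →ₗ[ℂ] H)) (W : ℕ → ℕ → (H →ₗ[ℂ] H))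
    (hS0 : S 0 = 1)
    -- T is the inverse power series S^{-1}(z) :
    (hT : ∀ n : ℕ,
      (∑ i ∈ Finset.range (n + 1), (S i) ∘ₗ (T (n - i)))
        = if n = 0 then (1 : H →ₗ[ℂ] H) else 0)
    -- defining relation of W : (z^{-1}+w^{-1})·∑ W_{k,l} z^{-k}w^{-l} = (S*)^{-1}(w)S^{-1}(z) - Id
    (hW : ∀ k l : ℕ,
      (if k = 0 then 0 else W (k - 1) l) + (if l = 0 then 0 else W k (l - 1))
        = (U l) ∘ₗ (T k) - (if k = 0 ∧ l = 0 then (1 : H →ₗ[ℂ] H) else 0)) :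
    ∀ k l : ℕ,
      (∑ m ∈ Finset.range (k + 1), (W m l) ∘ₗ (S (k - m)))
        = ((-1 : ℂ) ^ (l + 1)) • S (k + l + 1) := by
  simp only [← Module.End.mul_eq_comp] at hT hW ⊢
  have hTS : mk T * mk S = 1 :=
    mul_eq_one_symm_of_isUnit_constantCoeff (by simp [hS0]) (mk_mul_mk_eq_one hT)
  have hW0 : X * mk (W · 0) = C (U 0) * mk T - 1 := by
    ext n : 1
    simpa [coeff_X_mul_mk, coeff_C_mul, coeff_one] using hW n 0
  have hWsucc : ∀ l, X * mk (W · (l + 1)) + mk (W · l) = C (U (l + 1)) * mk T := by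
    intro l
    ext n : 1
    simpa [coeff_X_mul_mk, coeff_C_mul] using hW n (l + 1)
  intro k l
  have h := coeff_mul_eq_neg_one_pow_mul_coeff hTS (fun l ↦ mk (W · l)) U hW0 hWsucc k l
  rw [coeff_mk_mul_mk, coeff_mk] at h
  rw [h, Algebra.smul_def, map_pow, map_neg, map_one]

theorem stmt_5 {H : Type*} [AddCommGroup H] [Module ℂ H] [FiniteDimensional ℂ H]
    (B : LinearMap.BilinForm ℂ H) (hB : B.Nondegenerate)
    (hBsymm : ∀ x y, B x y = B y x)
    (adj : (H →ₗ[ℂ] H) → (H →ₗ[ℂ] H))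
    (hadj : ∀ A x y, B (adj A x) y = B x (A y))
    (S T U : ℕ → (H →ₗ[ℂ] H)) (W : ℕ → ℕ → (H →ₗ[ℂ] H))
    (hS0 : S 0 = 1)
    -- the symplectic condition S*(-z)S(z) = Id :
    (hsymp : ∀ n : ℕ,
      (∑ i ∈ Finset.range (n + 1), ((-1 : ℂ) ^ i) • ((adj (S i)) ∘ₗ (S (n - i))))
        = if n = 0 then (1 : H →ₗ[ℂ] H) else 0)
    -- T is the inverse power series S^{-1}(z) :
    (hT : ∀ n : ℕ,
      (∑ i ∈ Finset.range (n + 1), (S i) ∘ₗ (T (n - i)))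
        = if n = 0 then (1 : H →ₗ[ℂ] H) else 0)
    -- U is the inverse power series (S*)^{-1}(w), where S*(w) = ∑ S_i* w^{-i} :
    (hU : ∀ n : ℕ,
      (∑ i ∈ Finset.range (n + 1), (adj (S i)) ∘ₗ (U (n - i)))
        = if n = 0 then (1 : H →ₗ[ℂ] H) else 0)
    -- defining relation of W : (z^{-1}+w^{-1})·∑ W_{k,l} z^{-k}w^{-l} = (S*)^{-1}(w)S^{-1}(z) - Id
    (hW : ∀ k l : ℕ,
      (if k = 0 then 0 else W (k - 1) l) + (if l = 0 then 0 else W k (l - 1))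
        = (U l) ∘ₗ (T k) - (if k = 0 ∧ l = 0 then (1 : H →ₗ[ℂ] H) else 0)) :
    ∀ k l : ℕ,
      (∑ m ∈ Finset.range (k + 1), (W m l) ∘ₗ (S (k - m)))
        = ((-1 : ℂ) ^ (l + 1)) • S (k + l + 1) :=
  stmt_5_general S T U W hS0 hT hW
end

section
/- Let F be a smooth function (or formal power series) in variables q_k^α (k ≥ 0, 1 ≤ α ≤ N) satisfying the topological recursion relations ∂_{α,k+1}∂_{β,l}∂_{γ,m} F = ∑_{μ,ν} (∂_{α,k}∂_{μ,0} F) g^{μν} (∂_{ν,0}∂_{β,l}∂_{γ,m} F) for all k,l,m ≥ 0 and all indices. Then the function Φ(q) = F(q, 0, 0, …) of q = (q_0^1,…,q_0^N) satisfies the WDVV equations: ∑_{e,f} (∂_a∂_b∂_e Φ) g^{ef} (∂_f∂_c∂_d Φ) = ∑_{e,f} (∂_c∂_b∂_e Φ) g^{ef} (∂_f∂_a∂_d Φ) for all a,b,c,d. -/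
/-!
Differentiate the genus-zero TRR
`∂_{α,1}∂_{β,0}∂_{γ,0} F = ⟨∂_{α,0}∂_{μ,0} F, ∂_{ν,0}∂_{β,0}∂_{γ,0} F⟩_η` with respect to `q_0^δ`.
By the product rule,
`∂_{δ,0}∂_{α,1}∂_{β,0}∂_{γ,0} F = ⟨∂_δ∂_α∂_μ F, ∂_ν∂_β∂_γ F⟩_η + ⟨∂_α∂_μ F, ∂_δ∂_ν∂_β∂_γ F⟩_η`.
The left-hand side and the second term are symmetric in `β ↔ δ` because partial derivatives
commute, hence so is the first term: this is WDVV for the derivatives of `F` in the primary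
variables. Setting `q_k = 0` for `k ≥ 1` commutes with `∂_{a,0}`, so it carries over to `Φ`.
-/

open MvPolynomial

def contract {ι R A : Type*} [Fintype ι] [CommSemiring R] [Semiring A] [Algebra R A]
    (η : Matrix ι ι R) (u v : ι → A) : A :=
  ∑ μ, ∑ ν, η μ ν • (u μ * v ν)

theorem Derivation.map_contract {ι R A : Type*} [Fintype ι] [CommSemiring R] [CommSemiring A]
    [Algebra R A] (D : Derivation R A A) (η : Matrix ι ι R) (u v : ι → A) :
    D (contract η u v) = contract η (fun μ => D (u μ)) v + contract η u (fun ν => D (v ν)) := by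
  simp only [contract, map_sum, D.map_smul, D.leibniz, smul_eq_mul, ← Finset.sum_add_distrib,
    ← smul_add]
  refine Finset.sum_congr rfl fun μ _ => Finset.sum_congr rfl fun ν _ => ?_
  rw [add_comm, mul_comm (v ν)]

namespace MvPolynomial

variable {σ R : Type*} [CommSemiring R]

theorem pderiv_comm (i j : σ) (p : MvPolynomial σ R) :
    pderiv i (pderiv j p) = pderiv j (pderiv i p) := by
  have pderiv_pderiv_X (i j s : σ) : pderiv i (pderiv j (X s : MvPolynomial σ R)) = 0 := by
    by_cases h : s = j
    · rw [h, pderiv_X_self, pderiv_one]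
    · rw [pderiv_X_of_ne h, map_zero]
  induction p using MvPolynomial.induction_on with
  | C c => simp only [pderiv_C, map_zero]
  | add p q hp hq => simp only [map_add, hp, hq]
  | mul_X p s hp =>
    simp only [pderiv_mul, map_add, hp, pderiv_pderiv_X, mul_zero, add_zero]
    ring

theorem pderiv_pderiv_pderiv_swap (i j k : σ) (p : MvPolynomial σ R) :
    pderiv i (pderiv j (pderiv k p)) = pderiv k (pderiv j (pderiv i p)) := by
  rw [pderiv_comm j k, pderiv_comm i k, pderiv_comm i j]

theorem pderiv_aeval_eq_aeval_pderiv {τ : Type*} (f : σ → MvPolynomial τ R) {a : τ} {i : σ}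
    (hi : pderiv a (f i) = 1) (hf : ∀ s, s ≠ i → pderiv a (f s) = 0) (p : MvPolynomial σ R) :
    pderiv a (aeval f p) = aeval f (pderiv i p) := by
  have hX (s : σ) : pderiv a (f s) = aeval f (pderiv i (X s : MvPolynomial σ R)) := by
    by_cases h : s = i
    · rw [h, hi, pderiv_X_self, map_one]
    · rw [hf s h, pderiv_X_of_ne h, map_zero]
  induction p using MvPolynomial.induction_on with
  | C c => rw [aeval_C, pderiv_C, map_zero, algebraMap_eq, pderiv_C]
  | add p q hp hq => simp only [map_add, hp, hq]
  | mul_X p s hp => simp only [map_mul, aeval_X, pderiv_mul, hp, hX, map_add]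

theorem pderiv_aeval_descendantsZero {ι : Type*} (a : ι) (F : MvPolynomial (ℕ × ι) R) :
    pderiv a (aeval (fun p : ℕ × ι => if p.1 = 0 then (X p.2 : MvPolynomial ι R) else 0) F) =
      aeval (fun p : ℕ × ι => if p.1 = 0 then (X p.2 : MvPolynomial ι R) else 0)
        (pderiv (0, a) F) := by
  refine pderiv_aeval_eq_aeval_pderiv _ (by simp) (fun ⟨k, b⟩ hkb => ?_) F
  by_cases hk : k = 0
  · subst hk
    have hb : b ≠ a := fun h => hkb (h ▸ rfl)
    simp [pderiv_X_of_ne hb]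
  · simp [hk]

end MvPolynomial

theorem wdvv_of_trr {ι R : Type*} [Fintype ι] [CommRing R] (η : Matrix ι ι R)
    (F : MvPolynomial (ℕ × ι) R)
    (hTRR : ∀ α β γ : ι, pderiv (1, α) (pderiv (0, β) (pderiv (0, γ) F)) =
      contract η (fun μ => pderiv (0, α) (pderiv (0, μ) F))
        (fun ν => pderiv (0, ν) (pderiv (0, β) (pderiv (0, γ) F))))
    (α β γ δ : ι) :
    contract η (fun μ => pderiv (0, δ) (pderiv (0, α) (pderiv (0, μ) F)))
        (fun ν => pderiv (0, ν) (pderiv (0, β) (pderiv (0, γ) F))) =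
      contract η (fun μ => pderiv (0, β) (pderiv (0, α) (pderiv (0, μ) F)))
        (fun ν => pderiv (0, ν) (pderiv (0, δ) (pderiv (0, γ) F))) := by
  have hD (β δ : ι) : pderiv (0, δ) (pderiv (1, α) (pderiv (0, β) (pderiv (0, γ) F))) =
      contract η (fun μ => pderiv (0, δ) (pderiv (0, α) (pderiv (0, μ) F)))
          (fun ν => pderiv (0, ν) (pderiv (0, β) (pderiv (0, γ) F))) +
        contract η (fun μ => pderiv (0, α) (pderiv (0, μ) F))
          (fun ν => pderiv (0, δ) (pderiv (0, ν) (pderiv (0, β) (pderiv (0, γ) F)))) := by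
    rw [hTRR, Derivation.map_contract]
  have h := hD β δ
  rw [pderiv_pderiv_pderiv_swap (0, δ) (1, α) (0, β), hD δ β] at h
  simp only [pderiv_pderiv_pderiv_swap (0, δ) _ (0, β)] at h
  exact (add_right_cancel h).symm

theorem stmt_7_general {n : ℕ} (g : Matrix (Fin n) (Fin n) ℂ)
    (F : MvPolynomial (ℕ × Fin n) ℂ)
    -- topological recursion relations :
    (hTRR : ∀ (k l m : ℕ) (α β γ : Fin n),
      pderiv (k + 1, α) (pderiv (l, β) (pderiv (m, γ) F)) =
        ∑ μ : Fin n, ∑ ν : Fin n,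
          g⁻¹ μ ν • (pderiv (k, α) (pderiv (0, μ) F) *
            pderiv (0, ν) (pderiv (l, β) (pderiv (m, γ) F))))
    -- Φ is obtained from F by setting all q_k^α with k ≥ 1 to zero :
    (Φ : MvPolynomial (Fin n) ℂ)
    (hΦ : Φ = MvPolynomial.aeval
      (fun p : ℕ × Fin n => if p.1 = 0 then (X p.2 : MvPolynomial (Fin n) ℂ) else 0) F) :
    -- WDVV equations :
    ∀ a b c d : Fin n,
      (∑ e : Fin n, ∑ f : Fin n,
        g⁻¹ e f • (pderiv a (pderiv b (pderiv e Φ)) * pderiv f (pderiv c (pderiv d Φ))))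
      = ∑ e : Fin n, ∑ f : Fin n,
        g⁻¹ e f • (pderiv c (pderiv b (pderiv e Φ)) * pderiv f (pderiv a (pderiv d Φ))) := by
  intro a b c d
  subst hΦ
  simp only [pderiv_aeval_descendantsZero, ← map_mul, ← map_smul, ← map_sum]
  exact congrArg _ (wdvv_of_trr g⁻¹ F (hTRR 0 0 0) b c d a)

theorem stmt_7 {n : ℕ} (g : Matrix (Fin n) (Fin n) ℂ)
    (hgdet : IsUnit g.det) (hgsymm : g.IsSymm)
    (F : MvPolynomial (ℕ × Fin n) ℂ)
    -- topological recursion relations :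
    (hTRR : ∀ (k l m : ℕ) (α β γ : Fin n),
      pderiv (k + 1, α) (pderiv (l, β) (pderiv (m, γ) F)) =
        ∑ μ : Fin n, ∑ ν : Fin n,
          g⁻¹ μ ν • (pderiv (k, α) (pderiv (0, μ) F) *
            pderiv (0, ν) (pderiv (l, β) (pderiv (m, γ) F))))
    -- Φ is obtained from F by setting all q_k^α with k ≥ 1 to zero :
    (Φ : MvPolynomial (Fin n) ℂ)
    (hΦ : Φ = MvPolynomial.aeval
      (fun p : ℕ × Fin n => if p.1 = 0 then (X p.2 : MvPolynomial (Fin n) ℂ) else 0) F) :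
    -- WDVV equations :
    ∀ a b c d : Fin n,
      (∑ e : Fin n, ∑ f : Fin n,
        g⁻¹ e f • (pderiv a (pderiv b (pderiv e Φ)) * pderiv f (pderiv c (pderiv d Φ))))
      = ∑ e : Fin n, ∑ f : Fin n,
        g⁻¹ e f • (pderiv c (pderiv b (pderiv e Φ)) * pderiv f (pderiv a (pderiv d Φ))) :=
  stmt_7_general g F hTRR Φ hΦ
end

section
/- In the rank-one case, suppose F = ∑_{n≥0} q_1^{2-n} c_n (c_n of degree n in q_0, q_2, q_3, …) satisfies ∂_0 c_1 = 0, ∂_0² c_2 = 0, ∂_0³ c_3 = -1, and the TRR coefficient equation -6 c_3 = 2 (∂_0² c_3)(∂_0 c_3). Then c_3 = -(1/6) L³ where L = -∂_0² c_3 is a degree-1 form in q_0, q_2, q_3, … with coefficient of q_0 equal to 1. -/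
open MvPolynomial

/-- Differentiating `-6 f = 2 f'' f'` once and using `f''' = -1` gives `f' = -f''² / 2`;
substituting back yields `f = f''³ / 6`. -/
theorem Derivation.eq_cube_of_smul_eq_smul_mul {K A : Type*} [Field K] [CharZero K] [CommRing A]
    [Algebra K A] (D : Derivation K A A) {f : A} (h3 : D (D (D f)) = -1)
    (hTRR : (-6 : K) • f = (2 : K) • (D (D f) * D f)) :
    f = (-(1 / 6) : K) • (-D (D f)) ^ 3 := by
  have hD : (-6 : K) • D f = (2 : K) • (-D f + D (D f) ^ 2) := by
    simpa [Derivation.leibniz, h3, pow_two, add_comm] using congrArg D hTRR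
  have hDf : D f = (-(1 / 2) : K) • D (D f) ^ 2 := by
    linear_combination (norm := module) (-(1 / 4) : K) • hD
  have hcube : D (D f) * D f = (-(1 / 2) : K) • D (D f) ^ 3 :=
    calc D (D f) * D f = D (D f) * ((-(1 / 2) : K) • D (D f) ^ 2) := congrArg _ hDf
      _ = (-(1 / 2) : K) • D (D f) ^ 3 := by rw [mul_smul_comm, ← pow_succ']
  rw [hcube] at hTRR
  rw [Odd.neg_pow (by decide)]
  linear_combination (norm := module) (-(1 / 6) : K) • hTRR

theorem MvPolynomial.coeff_single_one_eq_coeff_zero_pderiv {σ R : Type*} [CommSemiring R]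
    (i : σ) (p : MvPolynomial σ R) :
    coeff (Finsupp.single i 1) p = coeff 0 (pderiv i p) := by
  simp [coeff_pderiv]

theorem stmt_15_general (c : ℕ → MvPolynomial ℕ ℂ)
    (hdeg : ∀ n : ℕ, (c n).IsHomogeneous n)
    (h3 : pderiv 0 (pderiv 0 (pderiv 0 (c 3))) = -1)
    (hTRR : (-6 : ℂ) • c 3 = (2 : ℂ) • (pderiv 0 (pderiv 0 (c 3)) * pderiv 0 (c 3))) :
    ∃ L : MvPolynomial ℕ ℂ,
      L = -(pderiv 0 (pderiv 0 (c 3))) ∧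
      L.IsHomogeneous 1 ∧
      MvPolynomial.coeff (Finsupp.single 0 1) L = 1 ∧
      c 3 = C (-(1 / 6 : ℂ)) * L ^ 3 := by
  refine ⟨_, rfl, (hdeg 3).pderiv.pderiv.neg, ?_, ?_⟩
  · rw [coeff_single_one_eq_coeff_zero_pderiv, map_neg, h3, neg_neg, coeff_zero_one]
  · rw [← smul_eq_C_mul]
    exact (pderiv 0).eq_cube_of_smul_eq_smul_mul h3 hTRR

theorem stmt_15 (c : ℕ → MvPolynomial ℕ ℂ)
    (hdeg : ∀ n : ℕ, (c n).IsHomogeneous n)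
    (hc1var : ∀ n : ℕ, pderiv 1 (c n) = 0)
    (h1 : pderiv 0 (c 1) = 0)
    (h2 : pderiv 0 (pderiv 0 (c 2)) = 0)
    (h3 : pderiv 0 (pderiv 0 (pderiv 0 (c 3))) = -1)
    (hTRR : (-6 : ℂ) • c 3 = (2 : ℂ) • (pderiv 0 (pderiv 0 (c 3)) * pderiv 0 (c 3))) :
    ∃ L : MvPolynomial ℕ ℂ,
      L = -(pderiv 0 (pderiv 0 (c 3))) ∧
      L.IsHomogeneous 1 ∧
      MvPolynomial.coeff (Finsupp.single 0 1) L = 1 ∧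
      c 3 = C (-(1 / 6 : ℂ)) * L ^ 3 :=
  stmt_15_general c hdeg h3 hTRR
end

section
/- For the genus-0 Gromov-Witten potential of a point, the psi-class intersection numbers on the moduli space of genus-0 stable curves satisfy: ∫_{M̄_{0,n}} ψ_1^{i_1} ⋯ ψ_n^{i_n} = (n-3)!/(i_1! ⋯ i_n!) whenever i_1 + ⋯ + i_n = n - 3 (and the integral is 0 otherwise). Equivalently, the formal series F(t_0,t_1,…) = ∑_{n≥3} (1/n!) ∑_{i_1+⋯+i_n=n-3} (n-3)!/(i_1!⋯i_n!) t_{i_1}⋯t_{i_n} satisfies the string equation ∂_0 F = (1/2)t_0² + ∑_{i≥0} t_{i+1} ∂_i F. -/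
/-- Number of marked points of a monomial exponent d : the monomial
t_{i_1}⋯t_{i_n} corresponds to d with d(i) = #{j : i_j = i}, so n = ∑_i d(i). -/
def nPts (d : ℕ →₀ ℕ) : ℕ := d.sum fun _ m => m

/-- Total ψ-degree ∑_i i · d(i). -/
def wt (d : ℕ →₀ ℕ) : ℕ := d.sum fun i m => i * m

/-- Coefficient of the monomial ∏ t_i^{d(i)} in the genus-0 point potential
F = ∑_{n≥3} (1/n!) ∑_{i_1+⋯+i_n=n-3} (n-3)!/(i_1!⋯i_n!) t_{i_1}⋯t_{i_n}, namely
(n-3)! / (∏_i (i!)^{d(i)} · d(i)!) when n = nPts d ≥ 3 and wt d = n - 3, else 0.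
(This encodes ∫_{M̄_{0,n}} ψ^{i_1}⋯ψ^{i_n} = (n-3)!/(i_1!⋯i_n!).) -/
noncomputable def cF (d : ℕ →₀ ℕ) : ℂ :=
  if 3 ≤ nPts d ∧ wt d + 3 = nPts d then
    (Nat.factorial (nPts d - 3) : ℂ) /
      ((d.prod fun i m => (Nat.factorial i) ^ m * Nat.factorial m : ℕ) : ℂ)
  else 0


/-!
Write `n = nPts d`, `w = wt d` and `D(d) = ∏ᵢ (i!)^{d i} · (d i)!`. Adding one point of degree `a`
multiplies `D` by `a! · (d a + 1)`, so `(d a + 1) · cF (d + δₐ) = (n - 2)! / (a! · D(d))` when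
`w + a + 2 = n` and `0` otherwise. Consequently the term `t_j ∂_{j-1} F` contributes
`j · d j · (n - 3)! / D(d)` to the coefficient of `d`, and these sum to `w · (n - 3)! / D(d)`, while
`∂₀ F` contributes `(n - 2)! / D(d) = w · (n - 3)! / D(d)`. The only exception is `w = 0`, `n = 2`,
i.e. `d = 2 δ₀`, which is the `t₀² / 2` term.
-/

open Finsupp

namespace StringEquation

def cFDenom (d : ℕ →₀ ℕ) : ℕ := d.prod fun i m => i.factorial ^ m * m.factorial

lemma cF_eq (d : ℕ →₀ ℕ) :
    cF d = if 3 ≤ nPts d ∧ wt d + 3 = nPts d then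
      ((nPts d - 3).factorial : ℂ) / cFDenom d else 0 := rfl

lemma cFDenom_pos (d : ℕ →₀ ℕ) : 0 < cFDenom d :=
  Finset.prod_pos fun i _ => Nat.mul_pos (Nat.pow_pos i.factorial_pos) (Nat.factorial_pos _)

lemma nPts_add_single (d : ℕ →₀ ℕ) (a : ℕ) : nPts (d + single a 1) = nPts d + 1 := by
  rw [nPts, sum_add_index' (fun _ => rfl) (fun _ _ _ => rfl), sum_single_index rfl]
  rfl

lemma wt_add_single (d : ℕ →₀ ℕ) (a : ℕ) : wt (d + single a 1) = wt d + a := by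
  rw [wt, sum_add_index' (fun _ => mul_zero _) (fun _ _ _ => mul_add _ _ _),
    sum_single_index (mul_zero _), mul_one]
  rfl

lemma nPts_single (a m : ℕ) : nPts (single a m) = m := sum_single_index rfl

lemma wt_single (a m : ℕ) : wt (single a m) = a * m := sum_single_index (mul_zero _)

lemma cFDenom_add_single (d : ℕ →₀ ℕ) (a : ℕ) :
    cFDenom (d + single a 1) = a.factorial * (d a + 1) * cFDenom d := by
  classical
  unfold cFDenom
  rw [← mul_prod_erase' (d + single a 1) a _ (fun _ => by simp),
    ← mul_prod_erase' d a _ (fun _ => by simp), erase_add, erase_single, add_zero,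
    Finsupp.add_apply, single_eq_same, pow_succ, Nat.factorial_succ]
  ring

lemma sum_mul_apply_eq_wt (d : ℕ →₀ ℕ) : ∑ j ∈ d.support, j * d j = wt d := rfl

lemma eq_single_zero_of_wt_eq_zero {d : ℕ →₀ ℕ} (h : wt d = 0) : d = single 0 (nPts d) := by
  have hsupp : d.support ⊆ {0} := fun i hi => by
    have : i * d i = 0 := (Finset.sum_eq_zero_iff.mp h) i hi
    simpa [mem_support_iff.mp hi] using this
  have hd : d = single 0 (d 0) := eq_single_iff.mpr ⟨hsupp, rfl⟩
  rw [hd, nPts_single]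

lemma add_one_mul_cF_add_single (d : ℕ →₀ ℕ) (a : ℕ) :
    ((d a : ℂ) + 1) * cF (d + single a 1) =
      if wt d + a + 2 = nPts d then
        ((nPts d - 2).factorial : ℂ) / (a.factorial * cFDenom d) else 0 := by
  have hD : (cFDenom d : ℂ) ≠ 0 := by exact_mod_cast (cFDenom_pos d).ne'
  rw [cF_eq, nPts_add_single, wt_add_single, cFDenom_add_single]
  by_cases h : wt d + a + 2 = nPts d
  · rw [if_pos (by omega), if_pos h, show nPts d + 1 - 3 = nPts d - 2 by omega]
    have ha : (a.factorial : ℂ) ≠ 0 := by exact_mod_cast a.factorial_pos.ne'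
    push_cast
    field_simp
  · rw [if_neg (by omega), if_neg h, mul_zero]

/-- The coefficient of `d` in `t_j ∂_{j-1} F` is `j · d j · stringCoeff d` (for `j ≥ 1`). -/
noncomputable def stringCoeff (d : ℕ →₀ ℕ) : ℂ :=
  if wt d + 2 = nPts d then ((nPts d - 3).factorial : ℂ) / cFDenom d else 0

lemma add_one_mul_cF_add_single_eq_stringCoeff (e : ℕ →₀ ℕ) (k : ℕ) :
    ((e k : ℂ) + 1) * cF (e + single k 1) =
      ((k + 1) * (e (k + 1) + 1) : ℕ) * stringCoeff (e + single (k + 1) 1) := by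
  have hD : (cFDenom e : ℂ) ≠ 0 := by exact_mod_cast (cFDenom_pos e).ne'
  rw [add_one_mul_cF_add_single, stringCoeff, nPts_add_single, wt_add_single,
    cFDenom_add_single]
  by_cases h : wt e + k + 2 = nPts e
  · rw [if_pos h, if_pos (by omega), show nPts e + 1 - 3 = nPts e - 2 by omega,
      Nat.factorial_succ]
    have hk : (k.factorial : ℂ) ≠ 0 := by exact_mod_cast k.factorial_pos.ne'
    push_cast
    field_simp
  · rw [if_neg h, if_neg (by omega), mul_zero]

lemma add_one_mul_cF_sub_single_add_single {d : ℕ →₀ ℕ} {j : ℕ} (hj : j ∈ d.support)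
    (hj0 : j ≠ 0) :
    (((d - single j 1 : ℕ →₀ ℕ) (j - 1) : ℂ) + 1) * cF (d - single j 1 + single (j - 1) 1) =
      (j * d j : ℕ) * stringCoeff d := by
  obtain ⟨k, rfl⟩ := Nat.exists_eq_add_one_of_ne_zero hj0
  have hd : d - single (k + 1) 1 + single (k + 1) 1 = d :=
    tsub_add_cancel_of_le <|
      single_le_iff.mpr (Nat.one_le_iff_ne_zero.mpr (mem_support_iff.mp hj))
  conv_rhs => rw [← hd]
  rw [Nat.add_sub_cancel, add_one_mul_cF_add_single_eq_stringCoeff, Finsupp.add_apply,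
    single_eq_same]

/-- Only `d = 2 δ₀` sees a difference between `∂₀ F` and `∑ t_j ∂_{j-1} F`. -/
lemma string_coeff_identity (d : ℕ →₀ ℕ) :
    (if wt d + 0 + 2 = nPts d then
        ((nPts d - 2).factorial : ℂ) / ((0 : ℕ).factorial * cFDenom d) else 0) =
      (if d = single 0 2 then (1 / 2 : ℂ) else 0) + (wt d : ℂ) * stringCoeff d := by
  rw [add_zero, stringCoeff, Nat.factorial_zero, Nat.cast_one, one_mul]
  by_cases h : wt d + 2 = nPts d
  · rw [if_pos h, if_pos h]
    by_cases hw : wt d = 0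
    · have hd : d = single 0 2 := by rw [eq_single_zero_of_wt_eq_zero hw]; congr; omega
      subst hd
      rw [if_pos rfl, nPts_single, wt_single]
      simp [cFDenom]
    · have hd : d ≠ single 0 2 := by rintro rfl; simp [wt_single] at hw
      rw [if_neg hd, zero_add, show nPts d - 2 = wt d by omega,
        show nPts d - 3 = wt d - 1 by omega, ← Nat.mul_factorial_pred hw]
      push_cast
      ring
  · have hd : d ≠ single 0 2 := by rintro rfl; simp [nPts_single, wt_single] at h
    rw [if_neg h, if_neg h, if_neg hd, mul_zero, add_zero]

end StringEquation

open StringEquation in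
theorem stmt_16 :
    ∀ d : ℕ →₀ ℕ,
      ((d 0 : ℂ) + 1) * cF (d + Finsupp.single 0 1)
        = (if d = Finsupp.single 0 2 then (1 / 2 : ℂ) else 0)
          + ∑ j ∈ d.support,
              if j = 0 then 0
              else ((((d - Finsupp.single j 1 : ℕ →₀ ℕ) (j - 1) : ℕ) : ℂ) + 1) *
                cF ((d - Finsupp.single j 1 : ℕ →₀ ℕ) + Finsupp.single (j - 1) 1) := by
  intro d
  have hterm : ∀ j ∈ d.support,
      (if j = 0 then 0
        else ((((d - single j 1 : ℕ →₀ ℕ) (j - 1) : ℕ) : ℂ) + 1) *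
          cF ((d - single j 1 : ℕ →₀ ℕ) + single (j - 1) 1)) =
        (j * d j : ℕ) * stringCoeff d := fun j hj => by
    by_cases hj0 : j = 0
    · simp [hj0]
    · rw [if_neg hj0, add_one_mul_cF_sub_single_add_single hj hj0]
  rw [Finset.sum_congr rfl hterm, ← Finset.sum_mul, ← Nat.cast_sum, sum_mul_apply_eq_wt,
    add_one_mul_cF_add_single, string_coeff_identity]
end
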